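/- arXiv:2211.02271 — 5 statements merged into one kernel-verified Lean document; each statement's English description precedes it below -/
import Mathlib

section
/- Let w ∈ A_s and let w⁺ be any element of P_{A_s}(w − λ∇f(w)). Then ((1 − λL)/(2λ))·‖w − w⁺‖² ≤ f(w) − f(w⁺). In particular, along the projected gradient iteration the objective values are nonincreasing. -/
/-!
The descent lemma `f y ≤ f w + ⟪∇f w, y - w⟫ + L/2 ‖y - w‖²` bounds the increase of `f` along
the step. On the other side, `w⁺` is at least as close to `w - λ∇f w` as the competitor `w ∈ A_s`,
and expanding both squared distances gives `‖w - w⁺‖² ≤ 2λ⟪w - w⁺, ∇f w⟫`. Adding the two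
inequalities yields the decrease `(1 - λL)/(2λ) ‖w - w⁺‖² ≤ f w - f w⁺`.
-/

open Filter Topology

noncomputable section

def spSet (n s : ℕ) : Set (EuclideanSpace ℝ (Fin n)) :=
  {w | (Finset.univ.filter fun i => w i ≠ 0).card ≤ s}

def projSet {n : ℕ} (A : Set (EuclideanSpace ℝ (Fin n))) (z : EuclideanSpace ℝ (Fin n)) :
    Set (EuclideanSpace ℝ (Fin n)) :=
  {y | y ∈ A ∧ ∀ x ∈ A, ‖z - y‖ ≤ ‖z - x‖}

def coordSub {n : ℕ} (J : Finset (Fin n)) : Set (EuclideanSpace ℝ (Fin n)) :=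
  {w | ∀ i ∉ J, w i = 0}

def coordRestrict {n : ℕ} (J : Finset (Fin n)) (v : EuclideanSpace ℝ (Fin n)) :
    EuclideanSpace ℝ (Fin n) :=
  (EuclideanSpace.equiv (Fin n) ℝ).symm (fun i => if i ∈ J then v i else 0)

open RealInnerProductSpace

variable {E : Type*} [NormedAddCommGroup E] [InnerProductSpace ℝ E]

theorem HasGradientAt.hasDerivAt_comp_add_smul [CompleteSpace E] {f : E → ℝ} {g x v : E} {t : ℝ}
    (hf : HasGradientAt f g (x + t • v)) :
    HasDerivAt (fun t : ℝ => f (x + t • v)) ⟪g, v⟫ t := by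
  have hline : HasDerivAt (fun t : ℝ => x + t • v) v t := by
    simpa using ((hasDerivAt_id t).smul_const v).const_add x
  exact (hasGradientAt_iff_hasFDerivAt.mp hf).comp_hasDerivAt t hline

theorem inner_gradient_sub_le_of_lipschitz {f' : E → E} {L : ℝ}
    (hlip : ∀ x y, ‖f' x - f' y‖ ≤ L * ‖x - y‖) (x v : E) {t : ℝ} (ht : 0 ≤ t) :
    ⟪f' (x + t • v) - f' x, v⟫ ≤ L * t * ‖v‖ ^ 2 :=
  calc ⟪f' (x + t • v) - f' x, v⟫ ≤ ‖f' (x + t • v) - f' x‖ * ‖v‖ := real_inner_le_norm _ _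
    _ ≤ L * ‖x + t • v - x‖ * ‖v‖ := by gcongr; exact hlip _ _
    _ = L * t * ‖v‖ ^ 2 := by
      rw [add_sub_cancel_left, norm_smul, Real.norm_of_nonneg ht]; ring

theorem descent_lemma [CompleteSpace E] {f : E → ℝ} {f' : E → E} {L : ℝ}
    (hgrad : ∀ x, HasGradientAt f (f' x) x) (hlip : ∀ x y, ‖f' x - f' y‖ ≤ L * ‖x - y‖)
    (x y : E) :
    f y ≤ f x + ⟪f' x, y - x⟫ + L / 2 * ‖y - x‖ ^ 2 := by
  set v := y - x
  -- the gap between `f` and its quadratic upper model along the segment is nonincreasing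
  let φ : ℝ → ℝ := fun t => f (x + t • v) - t * ⟪f' x, v⟫ - L / 2 * t ^ 2 * ‖v‖ ^ 2
  have hφ : ∀ t, HasDerivAt φ (⟪f' (x + t • v) - f' x, v⟫ - L * t * ‖v‖ ^ 2) t := by
    intro t
    have := ((hgrad (x + t • v)).hasDerivAt_comp_add_smul.sub
      ((hasDerivAt_id t).mul_const ⟪f' x, v⟫)).sub
      (((hasDerivAt_pow 2 t).const_mul (L / 2)).mul_const (‖v‖ ^ 2))
    exact this.congr_deriv (by rw [inner_sub_left]; ring)
  have hanti : AntitoneOn φ (Set.Icc 0 1) := by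
    refine antitoneOn_of_hasDerivWithinAt_nonpos (convex_Icc 0 1)
      (fun t _ => (hφ t).continuousAt.continuousWithinAt) (fun t _ => (hφ t).hasDerivWithinAt)
      fun t ht => ?_
    rw [interior_Icc] at ht
    linarith [inner_gradient_sub_le_of_lipschitz hlip x v ht.1.le]
  have h10 : φ 1 ≤ φ 0 := hanti (by norm_num) (by norm_num) zero_le_one
  simp only [φ, one_smul, zero_smul, add_zero, one_pow, one_mul, zero_mul, sub_zero,
    ne_eq, OfNat.ofNat_ne_zero, not_false_eq_true, zero_pow, mul_zero] at h10
  rw [add_sub_cancel] at h10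
  linarith

theorem norm_sub_sq_le_of_norm_step_sub_le {x y g : E} {lam : ℝ}
    (h : ‖x - lam • g - y‖ ≤ ‖x - lam • g - x‖) :
    ‖x - y‖ ^ 2 ≤ 2 * lam * ⟪x - y, g⟫ := by
  have hsq : ‖(x - y) - lam • g‖ ^ 2 ≤ ‖lam • g‖ ^ 2 := by
    rw [show x - y - lam • g = x - lam • g - y by abel, ← norm_neg (lam • g),
      show -(lam • g) = x - lam • g - x by abel]
    gcongr
  rw [norm_sub_sq_real, real_inner_smul_right] at hsq
  linarith

theorem sufficient_decrease_of_norm_step_sub_le [CompleteSpace E] {f : E → ℝ} {f' : E → E}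
    {L lam : ℝ}
    (hgrad : ∀ x, HasGradientAt f (f' x) x) (hlip : ∀ x y, ‖f' x - f' y‖ ≤ L * ‖x - y‖)
    (hlam : 0 < lam) {w y : E} (h : ‖w - lam • f' w - y‖ ≤ ‖w - lam • f' w - w‖) :
    (1 - lam * L) / (2 * lam) * ‖w - y‖ ^ 2 ≤ f w - f y := by
  have hdesc := descent_lemma hgrad hlip w y
  have hstep := norm_sub_sq_le_of_norm_step_sub_le h
  rw [← norm_neg (y - w), neg_sub, ← neg_sub w y, inner_neg_right, real_inner_comm] at hdesc
  rw [div_mul_eq_mul_div, div_le_iff₀ (by positivity)]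
  nlinarith [mul_le_mul_of_nonneg_left hdesc hlam.le]

theorem stmt0_general {n s : ℕ}
    (f : EuclideanSpace ℝ (Fin n) → ℝ)
    (f' : EuclideanSpace ℝ (Fin n) → EuclideanSpace ℝ (Fin n))
    (L lam : ℝ)
    (hgrad : ∀ x, HasGradientAt f (f' x) x)
    (hlip : ∀ x y, ‖f' x - f' y‖ ≤ L * ‖x - y‖)
    (hlam0 : 0 < lam)
    (w wplus : EuclideanSpace ℝ (Fin n))
    (hw : w ∈ spSet n s)
    (hwplus : wplus ∈ projSet (spSet n s) (w - lam • f' w)) :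
    (1 - lam * L) / (2 * lam) * ‖w - wplus‖ ^ 2 ≤ f w - f wplus :=
  sufficient_decrease_of_norm_step_sub_le hgrad hlip hlam0 (hwplus.2 w hw)

/-- sufficient decrease of one projected gradient step. -/
theorem stmt0 {n s : ℕ} (hs1 : 1 ≤ s) (hsn : s ≤ n)
    (f : EuclideanSpace ℝ (Fin n) → ℝ)
    (f' : EuclideanSpace ℝ (Fin n) → EuclideanSpace ℝ (Fin n))
    (L lam : ℝ) (hL : 0 < L)
    (hgrad : ∀ x, HasGradientAt f (f' x) x)
    (hlip : ∀ x y, ‖f' x - f' y‖ ≤ L * ‖x - y‖)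
    (hlam0 : 0 < lam) (hlamL : lam < 1 / L)
    (w wplus : EuclideanSpace ℝ (Fin n))
    (hw : w ∈ spSet n s)
    (hwplus : wplus ∈ projSet (spSet n s) (w - lam • f' w)) :
    (1 - lam * L) / (2 * lam) * ‖w - wplus‖ ^ 2 ≤ f w - f wplus :=
  stmt0_general f f' L lam hgrad hlip hlam0 w wplus hw hwplus
end
end

section
/- Suppose w* ∈ A_s satisfies P_{A_s}(w* − λ∇f(w*)) = {w*} (the projection is a singleton equal to w*). Then: (i) for every J ∈ I_{w*}, w* is the projection of w* − λ∇f(w*) onto the subspace A_J, equivalently (∇f(w*))_j = 0 for every j ∈ J with J ∈ I_{w*}; (ii) w* is a global minimizer of f over A_J for every J ∈ I_{w*}; and (iii) w* is a local minimizer of f over A_s. -/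
open Filter Topology

noncomputable section

/-! Write `z = w* - λ ∇f(w*)`. For an index set `J ⊇ supp w*`, Pythagoras splits
`‖z - w*‖²` as `‖z - z_J‖² + ‖z_J - w*‖²`, where `z_J` is `z` with the coordinates outside `J`
set to zero. If `|J| = s` then `z_J ∈ A_s`, so minimality of `w*` forces `w* = z_J`; this is (i),
and it says that `∇f(w*)` is orthogonal to `A_J`, so the first-order inequality of convexity
gives (ii). For (iii), every `v` close to `w*` has a support containing that of `w*`; if
`v ∈ A_s`, both supports fit into one `J` of size `s`, and (ii) applies. -/

theorem ConvexOn.add_inner_le_of_hasGradientAt {F : Type*} [NormedAddCommGroup F]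
    [InnerProductSpace ℝ F] [CompleteSpace F] {f : F → ℝ} {g x : F}
    (hf : ConvexOn ℝ Set.univ f) (hg : HasGradientAt f g x) (y : F) :
    f x + inner ℝ g (y - x) ≤ f y := by
  have hline : HasDerivAt (f ∘ AffineMap.lineMap x y) (inner ℝ g (y - x)) (0 : ℝ) := by
    have hg' : HasFDerivAt f (InnerProductSpace.toDual ℝ F g) (AffineMap.lineMap x y (0 : ℝ)) := by
      simpa using hg.hasFDerivAt
    simpa using hg'.comp_hasDerivAt (0 : ℝ) AffineMap.hasDerivAt_lineMap
  have := (hf.comp_affineMap (AffineMap.lineMap x y)).le_slope_of_hasDerivAt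
    (Set.mem_univ 0) (Set.mem_univ 1) one_pos hline
  simp only [slope_def_field, Function.comp_apply, AffineMap.lineMap_apply_one,
    AffineMap.lineMap_apply_zero, sub_zero, div_one] at this
  linarith

section Coordinates

variable {n s : ℕ} {J : Finset (Fin n)} {v w z : EuclideanSpace ℝ (Fin n)}

def coordSupport (w : EuclideanSpace ℝ (Fin n)) : Finset (Fin n) :=
  Finset.univ.filter fun i => w i ≠ 0

theorem mem_coordSub_iff : w ∈ coordSub J ↔ coordSupport w ⊆ J := by
  simp only [coordSub, coordSupport, Set.mem_ofPred_eq, Finset.subset_iff, Finset.mem_filter,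
    Finset.mem_univ, true_and]
  exact forall_congr' fun i => not_imp_comm

theorem coordRestrict_apply (J : Finset (Fin n)) (v : EuclideanSpace ℝ (Fin n)) (i : Fin n) :
    coordRestrict J v i = if i ∈ J then v i else 0 := rfl

theorem coordRestrict_mem_coordSub (J : Finset (Fin n)) (v : EuclideanSpace ℝ (Fin n)) :
    coordRestrict J v ∈ coordSub J := fun _ hi => if_neg hi

theorem coordSub_subset_spSet (hJ : J.card ≤ s) : coordSub J ⊆ spSet n s := fun _ hw =>
  (Finset.card_le_card (mem_coordSub_iff.mp hw)).trans hJ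

theorem norm_sub_sq_eq_norm_sub_coordRestrict_sq_add (hw : w ∈ coordSub J)
    (z : EuclideanSpace ℝ (Fin n)) :
    ‖z - w‖ ^ 2 = ‖z - coordRestrict J z‖ ^ 2 + ‖coordRestrict J z - w‖ ^ 2 := by
  simp only [EuclideanSpace.norm_sq_eq, Real.norm_eq_abs, sq_abs, PiLp.sub_apply,
    ← Finset.sum_add_distrib, coordRestrict_apply]
  refine Finset.sum_congr rfl fun i _ => ?_
  by_cases hi : i ∈ J
  · simp [hi]
  · simp [hi, hw i hi]

theorem coordRestrict_mem_projSet_coordSub (J : Finset (Fin n)) (z : EuclideanSpace ℝ (Fin n)) :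
    coordRestrict J z ∈ projSet (coordSub J) z := by
  refine ⟨coordRestrict_mem_coordSub J z, fun x hx => ?_⟩
  rw [← sq_le_sq₀ (norm_nonneg _) (norm_nonneg _), norm_sub_sq_eq_norm_sub_coordRestrict_sq_add hx]
  exact le_add_of_nonneg_right (sq_nonneg _)

theorem eq_coordRestrict_of_mem_projSet {A : Set (EuclideanSpace ℝ (Fin n))}
    (hw : w ∈ projSet A z) (hwJ : w ∈ coordSub J) (hA : coordRestrict J z ∈ A) :
    w = coordRestrict J z := by
  have hle := sq_le_sq₀ (norm_nonneg _) (norm_nonneg _) |>.mpr (hw.2 _ hA)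
  rw [norm_sub_sq_eq_norm_sub_coordRestrict_sq_add hwJ, add_le_iff_nonpos_right] at hle
  have hnorm : ‖coordRestrict J z - w‖ = 0 := pow_eq_zero_iff two_ne_zero |>.mp
    (le_antisymm hle (sq_nonneg _))
  exact (sub_eq_zero.mp (norm_eq_zero.mp hnorm)).symm

theorem apply_eq_zero_of_coordRestrict_sub_smul_eq {g : EuclideanSpace ℝ (Fin n)} {lam : ℝ}
    (h : coordRestrict J (w - lam • g) = w) (hlam : lam ≠ 0) {j : Fin n} (hj : j ∈ J) :
    g j = 0 := by
  have := congrArg (· j) h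
  simp only [coordRestrict_apply, if_pos hj, PiLp.sub_apply, PiLp.smul_apply, smul_eq_mul,
    sub_eq_self, mul_eq_zero] at this
  exact this.resolve_left hlam

theorem inner_sub_eq_zero_of_mem_coordSub {g : EuclideanSpace ℝ (Fin n)}
    (hg : ∀ j ∈ J, g j = 0) (hv : v ∈ coordSub J) (hw : w ∈ coordSub J) :
    inner ℝ g (v - w) = 0 := by
  rw [PiLp.inner_apply]
  refine Finset.sum_eq_zero fun i _ => ?_
  by_cases hi : i ∈ J
  · simp [hg i hi]
  · simp [hv i hi, hw i hi]

theorem eventually_coordSupport_subset (w : EuclideanSpace ℝ (Fin n)) :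
    ∀ᶠ v in 𝓝 w, coordSupport w ⊆ coordSupport v := by
  have hopen : IsOpen (⋂ i ∈ coordSupport w, {v : EuclideanSpace ℝ (Fin n) | v i ≠ 0}) :=
    isOpen_biInter_finset fun _ _ => isOpen_ne_fun (by fun_prop) continuous_const
  have hw : w ∈ ⋂ i ∈ coordSupport w, {v : EuclideanSpace ℝ (Fin n) | v i ≠ 0} :=
    Set.mem_iInter₂.mpr fun i hi => (Finset.mem_filter.mp hi).2
  filter_upwards [hopen.mem_nhds hw] with v hv i hi
  exact Finset.mem_filter.mpr ⟨Finset.mem_univ i, Set.mem_iInter₂.mp hv i hi⟩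

theorem exists_card_eq_mem_coordSub (hsn : s ≤ n) (hv : v ∈ spSet n s)
    (hwv : coordSupport w ⊆ coordSupport v) :
    ∃ J : Finset (Fin n), J.card = s ∧ w ∈ coordSub J ∧ v ∈ coordSub J := by
  obtain ⟨J, hvJ, -, hJ⟩ := Finset.exists_subsuperset_card_eq (Finset.subset_univ _) hv
    (by simpa using hsn)
  exact ⟨J, hJ, mem_coordSub_iff.mpr (hwv.trans hvJ), mem_coordSub_iff.mpr hvJ⟩

end Coordinates

theorem stmt4_general {n s : ℕ} (hsn : s ≤ n)
    (f : EuclideanSpace ℝ (Fin n) → ℝ)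
    (f' : EuclideanSpace ℝ (Fin n) → EuclideanSpace ℝ (Fin n))
    (lam : ℝ)
    (hconv : ConvexOn ℝ Set.univ f)
    (hgrad : ∀ x, HasGradientAt f (f' x) x)
    (hlam0 : 0 < lam)
    (wstar : EuclideanSpace ℝ (Fin n))
    (hsingleton : projSet (spSet n s) (wstar - lam • f' wstar) = {wstar}) :
    (∀ J : Finset (Fin n), J.card = s → wstar ∈ coordSub J →
      wstar ∈ projSet (coordSub J) (wstar - lam • f' wstar) ∧ ∀ j ∈ J, f' wstar j = 0) ∧
    (∀ J : Finset (Fin n), J.card = s → wstar ∈ coordSub J →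
      ∀ v ∈ coordSub J, f wstar ≤ f v) ∧
    (∃ δ > 0, ∀ v ∈ spSet n s, ‖v - wstar‖ < δ → f wstar ≤ f v) := by
  set z := wstar - lam • f' wstar
  have hproj : wstar ∈ projSet (spSet n s) z := hsingleton ▸ rfl
  have hw_eq (J : Finset (Fin n)) (hJ : J.card = s) (hwJ : wstar ∈ coordSub J) :
      coordRestrict J z = wstar :=
    (eq_coordRestrict_of_mem_projSet hproj hwJ (coordSub_subset_spSet hJ.le
      (coordRestrict_mem_coordSub J z))).symm
  have hgrad_zero (J : Finset (Fin n)) (hJ : J.card = s) (hwJ : wstar ∈ coordSub J) :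
      ∀ j ∈ J, f' wstar j = 0 := fun _ =>
    apply_eq_zero_of_coordRestrict_sub_smul_eq (hw_eq J hJ hwJ) hlam0.ne'
  have hmin (J : Finset (Fin n)) (hJ : J.card = s) (hwJ : wstar ∈ coordSub J) :
      ∀ v ∈ coordSub J, f wstar ≤ f v := fun v hv => by
    simpa [inner_sub_eq_zero_of_mem_coordSub (hgrad_zero J hJ hwJ) hv hwJ] using
      hconv.add_inner_le_of_hasGradientAt (hgrad wstar) v
  refine ⟨fun J hJ hwJ => ⟨hw_eq J hJ hwJ ▸ coordRestrict_mem_projSet_coordSub J z,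
    hgrad_zero J hJ hwJ⟩, hmin, ?_⟩
  obtain ⟨δ, hδ, hnear⟩ := Metric.eventually_nhds_iff.mp (eventually_coordSupport_subset wstar)
  refine ⟨δ, hδ, fun v hv hvw => ?_⟩
  obtain ⟨J, hJ, hwJ, hvJ⟩ :=
    exists_card_eq_mem_coordSub hsn hv (hnear (by rwa [dist_eq_norm]))
  exact hmin J hJ hwJ v hvJ

/-- if the projection of the gradient step at $w^*$ is the singleton
$\{w^*\}$, then $w^*$ is the projection onto each active subspace (equivalently the
gradient vanishes on each active index set), is a global minimizer of $f$ on each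
active subspace, and is a local minimizer of $f$ over $A_s$. -/
theorem stmt4 {n s : ℕ} (hs1 : 1 ≤ s) (hsn : s ≤ n)
    (f : EuclideanSpace ℝ (Fin n) → ℝ)
    (f' : EuclideanSpace ℝ (Fin n) → EuclideanSpace ℝ (Fin n))
    (L lam : ℝ) (hL : 0 < L)
    (hconv : ConvexOn ℝ Set.univ f)
    (hgrad : ∀ x, HasGradientAt f (f' x) x)
    (hlip : ∀ x y, ‖f' x - f' y‖ ≤ L * ‖x - y‖)
    (hlam0 : 0 < lam) (hlamL : lam < 1 / L)
    (wstar : EuclideanSpace ℝ (Fin n)) (hws : wstar ∈ spSet n s)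
    (hsingleton : projSet (spSet n s) (wstar - lam • f' wstar) = {wstar}) :
    (∀ J : Finset (Fin n), J.card = s → wstar ∈ coordSub J →
      wstar ∈ projSet (coordSub J) (wstar - lam • f' wstar) ∧ ∀ j ∈ J, f' wstar j = 0) ∧
    (∀ J : Finset (Fin n), J.card = s → wstar ∈ coordSub J →
      ∀ v ∈ coordSub J, f wstar ≤ f v) ∧
    (∃ δ > 0, ∀ v ∈ spSet n s, ‖v - wstar‖ < δ → f wstar ≤ f v) :=
  stmt4_general hsn f f' lam hconv hgrad hlam0 wstar hsingleton
end
end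

section
/- Let {w^k} be a sequence generated by the projected gradient iteration w^{k+1} ∈ P_{A_s}(w^k − λ∇f(w^k)) with w^0 ∈ A_s, and let w* be an accumulation point of {w^k} such that P_{A_s}(w* − λ∇f(w*)) is a singleton. Then the full sequence {w^k} converges to w*. -/
/-! The gradient step `z ↦ z - λ∇f z` of a convex `L`-smooth function is nonexpansive for
`λ ≤ 2/L` (cocoercivity of the gradient), and the sufficient-decrease inequality of projected
gradient forces `w (k+1) - w k → 0`, so every accumulation point `w*` is a fixed point:
`w* ∈ P(w* - λ∇f w*)`. The set `A_s` is a finite union of coordinate subspaces and a nearest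
point of `z` lies in one of them, `A_J`, where it is the orthogonal projection of `z` on `A_J`.
Near `z* = w* - λ∇f w*` only subspaces that are optimal for `z*` can be optimal, and since
`P(z*) = {w*}` they all project `z*` to `w*`; hence `‖P(z) - w*‖ ≤ ‖z - z*‖`. Combined with
nonexpansiveness, the distance `‖w k - w*‖` can no longer increase once it is small, and it does
become small along the convergent subsequence. -/

open Filter Topology

noncomputable section

open Set RealInnerProductSpace

section SmoothConvex

variable {F : Type*} [NormedAddCommGroup F] [InnerProductSpace ℝ F] [CompleteSpace F]
  {f : F → ℝ} {g : F → F} {L : ℝ}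

lemma HasGradientAt.hasDerivAt_comp_lineMap {g' x y : F} {t : ℝ}
    (h : HasGradientAt f g' (AffineMap.lineMap x y t)) :
    HasDerivAt (fun t => f (AffineMap.lineMap x y t)) ⟪g', y - x⟫ t :=
  h.hasFDerivAt.comp_hasDerivAt t AffineMap.hasDerivAt_lineMap

lemma ConvexOn.add_inner_le_of_hasGradientAt_s5 (hf : ConvexOn ℝ univ f) {g' x : F}
    (hx : HasGradientAt f g' x) (y : F) : f x + ⟪g', y - x⟫ ≤ f y := by
  have hline : ConvexOn ℝ univ (fun t : ℝ => f (AffineMap.lineMap x y t)) := by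
    have := hf.comp_affineMap (AffineMap.lineMap (k := ℝ) x y)
    rwa [preimage_univ] at this
  have hder := (AffineMap.lineMap_apply_zero x y (k := ℝ) ▸ hx).hasDerivAt_comp_lineMap
  have := hline.le_slope_of_hasDerivAt (mem_univ 0) (mem_univ 1) one_pos hder
  simp only [slope_def_field, AffineMap.lineMap_apply_zero, AffineMap.lineMap_apply_one] at this
  linarith

lemma le_add_inner_add_mul_sq_of_lipschitz_gradient (hgrad : ∀ x, HasGradientAt f (g x) x)
    (hlip : ∀ x y, ‖g x - g y‖ ≤ L * ‖x - y‖) (x y : F) :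
    f y ≤ f x + ⟪g x, y - x⟫ + L / 2 * ‖y - x‖ ^ 2 := by
  set d := y - x
  have hφ : ∀ t, HasDerivAt (fun t => f (AffineMap.lineMap x y t))
      ⟪g (AffineMap.lineMap x y t), d⟫ t := fun t => (hgrad _).hasDerivAt_comp_lineMap
  have hB : ∀ t : ℝ, HasDerivAt (fun t => f x + t * ⟪g x, d⟫ + L / 2 * t ^ 2 * ‖d‖ ^ 2)
      (⟪g x, d⟫ + L * t * ‖d‖ ^ 2) t := fun t =>
    ((((hasDerivAt_id' t).mul_const _).const_add (f x)).add
      (((hasDerivAt_pow 2 t).const_mul (L / 2)).mul_const (‖d‖ ^ 2))).congr_deriv (by ring)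
  have hbound : ∀ t ∈ Ico (0 : ℝ) 1,
      ⟪g (AffineMap.lineMap x y t), d⟫ ≤ ⟪g x, d⟫ + L * t * ‖d‖ ^ 2 := by
    rintro t ⟨ht, -⟩
    calc ⟪g (AffineMap.lineMap x y t), d⟫
        = ⟪g x, d⟫ + ⟪g (AffineMap.lineMap x y t) - g x, d⟫ := by rw [inner_sub_left]; ring
      _ ≤ ⟪g x, d⟫ + ‖g (AffineMap.lineMap x y t) - g x‖ * ‖d‖ := by
        gcongr; exact real_inner_le_norm _ _
      _ ≤ ⟪g x, d⟫ + L * (t * ‖d‖) * ‖d‖ := by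
        have hdist : ‖AffineMap.lineMap x y t - x‖ = t * ‖d‖ := by
          rw [← dist_eq_norm, dist_lineMap_left, Real.norm_of_nonneg ht, dist_eq_norm']
        gcongr
        exact hdist ▸ hlip _ _
      _ = ⟪g x, d⟫ + L * t * ‖d‖ ^ 2 := by ring
  have := image_le_of_deriv_right_le_deriv_boundary
    (fun t _ => (hφ t).continuousAt.continuousWithinAt) (fun t _ => (hφ t).hasDerivWithinAt)
    (by simp) (fun t _ => (hB t).continuousAt.continuousWithinAt)
    (fun t _ => (hB t).hasDerivWithinAt) hbound (right_mem_Icc.2 zero_le_one)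
  simpa using this

lemma ConvexOn.add_inner_add_norm_sq_div_le (hf : ConvexOn ℝ univ f)
    (hgrad : ∀ x, HasGradientAt f (g x) x) (hlip : ∀ x y, ‖g x - g y‖ ≤ L * ‖x - y‖)
    (hL : 0 < L) (a b : F) :
    f a + ⟪g a, b - a⟫ + ‖g b - g a‖ ^ 2 / (2 * L) ≤ f b := by
  set D := g b - g a
  -- `u` is the gradient step from `b` for `f - ⟪g a, ·⟫`, which is minimal at `a`
  set u := b - L⁻¹ • D
  have hconv := hf.add_inner_le_of_hasGradientAt_s5 (hgrad a) u
  have hdesc := le_add_inner_add_mul_sq_of_lipschitz_gradient hgrad hlip b u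
  rw [show u - a = (b - a) - L⁻¹ • D by simp only [u]; abel, inner_sub_right,
    real_inner_smul_right] at hconv
  rw [show u - b = -(L⁻¹ • D) by simp only [u]; abel, inner_neg_right, real_inner_smul_right,
    norm_neg, norm_smul, mul_pow, Real.norm_of_nonneg (inv_nonneg.2 hL.le)] at hdesc
  have hD : L⁻¹ * ⟪g b, D⟫ - L⁻¹ * ⟪g a, D⟫ = L⁻¹ * ‖D‖ ^ 2 := by
    rw [← mul_sub, ← inner_sub_left, real_inner_self_eq_norm_sq]
  have hL' : L ≠ 0 := hL.ne'
  have e1 : L / 2 * (L⁻¹ ^ 2 * ‖D‖ ^ 2) = ‖D‖ ^ 2 / (2 * L) := by field_simp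
  have e2 : L⁻¹ * ‖D‖ ^ 2 = 2 * (‖D‖ ^ 2 / (2 * L)) := by field_simp
  linarith

lemma ConvexOn.norm_sub_sq_le_mul_inner (hf : ConvexOn ℝ univ f)
    (hgrad : ∀ x, HasGradientAt f (g x) x) (hlip : ∀ x y, ‖g x - g y‖ ≤ L * ‖x - y‖)
    (hL : 0 < L) (x y : F) :
    ‖g x - g y‖ ^ 2 ≤ L * ⟪g x - g y, x - y⟫ := by
  have hxy := hf.add_inner_add_norm_sq_div_le hgrad hlip hL x y
  have hyx := hf.add_inner_add_norm_sq_div_le hgrad hlip hL y x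
  rw [norm_sub_rev] at hxy
  have hinner : ⟪g x - g y, x - y⟫ = -⟪g x, y - x⟫ - ⟪g y, x - y⟫ := by
    rw [inner_sub_left, ← neg_sub x y, inner_neg_right]; ring
  have hL' : L ≠ 0 := hL.ne'
  have e : L * (‖g x - g y‖ ^ 2 / (2 * L)) = ‖g x - g y‖ ^ 2 / 2 := by field_simp
  rw [hinner]
  nlinarith

lemma ConvexOn.norm_gradStep_sub_le (hf : ConvexOn ℝ univ f)
    (hgrad : ∀ x, HasGradientAt f (g x) x) (hlip : ∀ x y, ‖g x - g y‖ ≤ L * ‖x - y‖)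
    (hL : 0 < L) {lam : ℝ} (hlam : 0 ≤ lam) (hlamL : lam * L ≤ 2) (x y : F) :
    ‖(x - lam • g x) - (y - lam • g y)‖ ≤ ‖x - y‖ := by
  have hco := hf.norm_sub_sq_le_mul_inner hgrad hlip hL x y
  have hexp : ‖(x - lam • g x) - (y - lam • g y)‖ ^ 2
      = ‖x - y‖ ^ 2 - 2 * lam * ⟪g x - g y, x - y⟫ + lam ^ 2 * ‖g x - g y‖ ^ 2 := by
    rw [show (x - lam • g x) - (y - lam • g y) = (x - y) - lam • (g x - g y) by
      rw [smul_sub]; abel, norm_sub_sq_real, real_inner_smul_right, norm_smul, mul_pow,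
      Real.norm_eq_abs, sq_abs, real_inner_comm]
    ring
  have hinner : 0 ≤ ⟪g x - g y, x - y⟫ := by nlinarith [sq_nonneg ‖g x - g y‖]
  refine (pow_le_pow_iff_left₀ (norm_nonneg _) (norm_nonneg _) two_ne_zero).1 ?_
  rw [hexp]
  nlinarith [mul_le_mul_of_nonneg_left hco (sq_nonneg lam),
    mul_nonneg (mul_nonneg (sub_nonneg.2 hlamL) hlam) hinner]

lemma add_mul_norm_sub_sq_le_of_norm_gradStep_sub_le (hgrad : ∀ x, HasGradientAt f (g x) x)
    (hlip : ∀ x y, ‖g x - g y‖ ≤ L * ‖x - y‖) {lam : ℝ} (hlam : 0 < lam) {x y : F}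
    (hy : ‖(x - lam • g x) - y‖ ≤ ‖(x - lam • g x) - x‖) :
    f y + (1 / (2 * lam) - L / 2) * ‖y - x‖ ^ 2 ≤ f x := by
  have hdesc := le_add_inner_add_mul_sq_of_lipschitz_gradient hgrad hlip x y
  have hsq := pow_le_pow_left₀ (norm_nonneg _) hy 2
  rw [show (x - lam • g x) - y = -((y - x) + lam • g x) by abel,
    show (x - lam • g x) - x = -(lam • g x) by abel, norm_neg, norm_neg, norm_add_sq_real,
    real_inner_smul_right, real_inner_comm] at hsq
  have hinner : ⟪g x, y - x⟫ ≤ -(‖y - x‖ ^ 2 / (2 * lam)) := by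
    rw [le_neg, div_le_iff₀ (by positivity)]
    nlinarith
  have e : (1 / (2 * lam) - L / 2) * ‖y - x‖ ^ 2
      = ‖y - x‖ ^ 2 / (2 * lam) - L / 2 * ‖y - x‖ ^ 2 := by ring
  linarith

end SmoothConvex

lemma tendsto_sub_of_add_mul_norm_sq_le {E : Type*} [SeminormedAddCommGroup E] {u : ℕ → E}
    {a : ℕ → ℝ} {c : ℝ} (hc : 0 < c) (hdec : ∀ k, a (k + 1) + c * ‖u (k + 1) - u k‖ ^ 2 ≤ a k)
    (hbdd : BddBelow (range a)) :
    Tendsto (fun k => u (k + 1) - u k) atTop (𝓝 0) := by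
  have hanti : Antitone a := antitone_nat_of_succ_le fun k => by
    nlinarith [hdec k, mul_nonneg hc.le (sq_nonneg ‖u (k + 1) - u k‖)]
  have hlim := tendsto_atTop_ciInf hanti hbdd
  have hgap : Tendsto (fun k => (a k - a (k + 1)) / c) atTop (𝓝 0) := by
    simpa using (hlim.sub (hlim.comp (tendsto_add_atTop_nat 1))).div_const c
  have hsq : Tendsto (fun k => ‖u (k + 1) - u k‖ ^ 2) atTop (𝓝 0) :=
    squeeze_zero (fun _ => by positivity)
      (fun k => by rw [le_div_iff₀ hc]; linarith [hdec k]) hgap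
  rw [tendsto_zero_iff_norm_tendsto_zero]
  simpa [Real.sqrt_sq (norm_nonneg _)] using hsq.sqrt

lemma tendsto_of_mem_closure_range_of_dist_le {X : Type*} [PseudoMetricSpace X] {u : ℕ → X}
    {a : X} (ha : a ∈ closure (range u)) {δ : ℝ} (hδ : 0 < δ)
    (hstep : ∀ k, dist (u k) a < δ → dist (u (k + 1)) a ≤ dist (u k) a) :
    Tendsto u atTop (𝓝 a) := by
  refine Metric.tendsto_atTop.2 fun ε hε => ?_
  obtain ⟨N, hN⟩ := Metric.mem_closure_range_iff.1 ha (min ε δ) (lt_min hε hδ)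
  rw [dist_comm] at hN
  have hstay : ∀ k ≥ N, dist (u k) a ≤ dist (u N) a := by
    intro k hk
    induction k, hk using Nat.le_induction with
    | base => exact le_rfl
    | succ k _ ih => exact (hstep k (ih.trans_lt (hN.trans_le (min_le_right _ _)))).trans ih
  exact ⟨N, fun k hk => (hstay k hk).trans_lt (hN.trans_le (min_le_left _ _))⟩

lemma eventually_argmin_subset {ι X : Type*} [Finite ι] [TopologicalSpace X] {g : ι → X → ℝ}
    {x : X} (hg : ∀ i, ContinuousAt (g i) x) :
    ∀ᶠ z in 𝓝 x, ∀ i, (∀ j, g i z ≤ g j z) → ∀ j, g i x ≤ g j x := by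
  have hstrict : ∀ᶠ z in 𝓝 x, ∀ i j, g j x < g i x → g j z < g i z := by
    refine eventually_all.2 fun i => eventually_all.2 fun j => ?_
    by_cases h : g j x < g i x
    · exact ((hg j).eventually_lt (hg i) h).mono fun _ hz _ => hz
    · exact Eventually.of_forall fun _ h' => absurd h' h
  filter_upwards [hstrict] with z hz i hi j
  by_contra! hlt
  exact (hi j).not_gt (hz i j hlt)

section Projection

variable {n : ℕ}

lemma mem_projSet_of_tendsto {α : Type*} {l : Filter α} [l.NeBot]
    {A : Set (EuclideanSpace ℝ (Fin n))} (hA : IsClosed A) {z y : α → EuclideanSpace ℝ (Fin n)}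
    {z₀ y₀ : EuclideanSpace ℝ (Fin n)} (hz : Tendsto z l (𝓝 z₀)) (hy : Tendsto y l (𝓝 y₀))
    (h : ∀ a, y a ∈ projSet A (z a)) : y₀ ∈ projSet A z₀ :=
  ⟨hA.mem_of_tendsto hy (Eventually.of_forall fun a => (h a).1), fun x hx =>
    le_of_tendsto_of_tendsto' (hz.sub hy).norm (hz.sub tendsto_const_nhds).norm
      fun a => (h a).2 x hx⟩

section Subspace

variable {K : Submodule ℝ (EuclideanSpace ℝ (Fin n))} [K.HasOrthogonalProjection]

lemma norm_sub_sq_eq_norm_sub_starProjection_sq_add {x : EuclideanSpace ℝ (Fin n)} (hx : x ∈ K)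
    (z : EuclideanSpace ℝ (Fin n)) :
    ‖z - x‖ ^ 2 = ‖z - K.starProjection z‖ ^ 2 + ‖K.starProjection z - x‖ ^ 2 := by
  rw [← sub_add_sub_cancel z (K.starProjection z) x, sq, sq, sq,
    norm_add_sq_eq_norm_sq_add_norm_sq_real]
  exact K.starProjection_inner_eq_zero z _ (K.sub_mem (K.starProjection_apply_mem z) hx)

lemma norm_sub_starProjection_le {x : EuclideanSpace ℝ (Fin n)} (hx : x ∈ K)
    (z : EuclideanSpace ℝ (Fin n)) : ‖z - K.starProjection z‖ ≤ ‖z - x‖ := by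
  refine (pow_le_pow_iff_left₀ (norm_nonneg _) (norm_nonneg _) two_ne_zero).1 ?_
  rw [norm_sub_sq_eq_norm_sub_starProjection_sq_add hx z]
  exact le_add_of_nonneg_right (sq_nonneg _)

lemma eq_starProjection_of_mem_projSet {A : Set (EuclideanSpace ℝ (Fin n))}
    (hKA : (K : Set _) ⊆ A) {z y : EuclideanSpace ℝ (Fin n)} (hy : y ∈ projSet A z) (hyK : y ∈ K) :
    y = K.starProjection z := by
  have h := pow_le_pow_left₀ (norm_nonneg _) (hy.2 _ (hKA (K.starProjection_apply_mem z))) 2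
  rw [norm_sub_sq_eq_norm_sub_starProjection_sq_add hyK z] at h
  have h0 : ‖K.starProjection z - y‖ ^ 2 = 0 := le_antisymm (by linarith) (sq_nonneg _)
  exact (sub_eq_zero.1 (norm_eq_zero.1 (pow_eq_zero_iff two_ne_zero |>.1 h0))).symm

end Subspace

section UnionOfSubspaces

variable {ι : Type*} {K : ι → Submodule ℝ (EuclideanSpace ℝ (Fin n))}
  [∀ i, (K i).HasOrthogonalProjection]

lemma starProjection_mem_projSet_iUnion {z : EuclideanSpace ℝ (Fin n)} {i : ι}
    (hi : ∀ j, ‖z - (K i).starProjection z‖ ≤ ‖z - (K j).starProjection z‖) :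
    (K i).starProjection z ∈ projSet (⋃ j, (K j : Set _)) z :=
  ⟨mem_iUnion.2 ⟨i, (K i).starProjection_apply_mem z⟩, fun x hx => by
    obtain ⟨j, hj⟩ := mem_iUnion.1 hx
    exact (hi j).trans (norm_sub_starProjection_le hj z)⟩

lemma eventually_norm_sub_le_of_projSet_iUnion_eq_singleton [Finite ι]
    {z₀ p : EuclideanSpace ℝ (Fin n)} (hp : projSet (⋃ i, (K i : Set _)) z₀ = {p}) :
    ∀ᶠ z in 𝓝 z₀, ∀ y ∈ projSet (⋃ i, (K i : Set _)) z, ‖y - p‖ ≤ ‖z - z₀‖ := by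
  have hcont : ∀ i, ContinuousAt (fun z => ‖z - (K i).starProjection z‖) z₀ := fun i =>
    (continuous_id.sub (K i).starProjection.continuous).norm.continuousAt
  filter_upwards [eventually_argmin_subset hcont] with z hz y hy
  obtain ⟨i, hyK⟩ := mem_iUnion.1 hy.1
  have hyP := eq_starProjection_of_mem_projSet
    (subset_iUnion (fun j => (K j : Set (EuclideanSpace ℝ (Fin n)))) i) hy hyK
  have hmin : ∀ j, ‖z - (K i).starProjection z‖ ≤ ‖z - (K j).starProjection z‖ := fun j => by
    rw [← hyP]
    exact hy.2 _ (mem_iUnion.2 ⟨j, (K j).starProjection_apply_mem z⟩)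
  have hpi : (K i).starProjection z₀ = p := by
    simpa [hp] using starProjection_mem_projSet_iUnion (hz i hmin)
  rw [hyP, ← hpi, ← map_sub]
  exact (K i).norm_starProjection_apply_le _

end UnionOfSubspaces

def coordSubmodule (J : Finset (Fin n)) : Submodule ℝ (EuclideanSpace ℝ (Fin n)) where
  carrier := coordSub J
  add_mem' {v w} hv hw i hi := by simp [hv i hi, hw i hi]
  zero_mem' _ _ := rfl
  smul_mem' c v hv i hi := by simp [hv i hi]

lemma spSet_eq_iUnion_coordSubmodule (s : ℕ) :
    spSet n s = ⋃ J : {J : Finset (Fin n) // J.card ≤ s}, (coordSubmodule J.1 : Set _) := by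
  ext w
  simp only [mem_iUnion]
  constructor
  · intro hw
    exact ⟨⟨_, hw⟩, fun i hi => by simpa using hi⟩
  · rintro ⟨⟨J, hJ⟩, hw⟩
    refine (Finset.card_le_card fun i hi => ?_).trans hJ
    by_contra hiJ
    exact (Finset.mem_filter.1 hi).2 (hw i hiJ)

lemma isClosed_spSet (s : ℕ) : IsClosed (spSet n s) := by
  rw [spSet_eq_iUnion_coordSubmodule]
  exact isClosed_iUnion_of_finite fun J => (coordSubmodule J.1).closed_of_finiteDimensional

end Projection

section ProjectedGradient

variable {n : ℕ} {f : EuclideanSpace ℝ (Fin n) → ℝ}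
  {g : EuclideanSpace ℝ (Fin n) → EuclideanSpace ℝ (Fin n)} {L lam : ℝ}
  {A : Set (EuclideanSpace ℝ (Fin n))} {w : ℕ → EuclideanSpace ℝ (Fin n)}

lemma tendsto_sub_of_mem_projSet_gradStep (hgrad : ∀ x, HasGradientAt f (g x) x)
    (hlip : ∀ x y, ‖g x - g y‖ ≤ L * ‖x - y‖) (hlam : 0 < lam) (hlamL : lam * L < 1)
    (hbdd : BddBelow (f '' A)) (hmem : ∀ k, w k ∈ A)
    (hiter : ∀ k, w (k + 1) ∈ projSet A (w k - lam • g (w k))) :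
    Tendsto (fun k => w (k + 1) - w k) atTop (𝓝 0) := by
  have hc : 0 < 1 / (2 * lam) - L / 2 := by
    rw [sub_pos, div_lt_div_iff₀ two_pos (by positivity)]
    linarith
  exact tendsto_sub_of_add_mul_norm_sq_le hc
    (fun k => add_mul_norm_sub_sq_le_of_norm_gradStep_sub_le hgrad hlip hlam
      ((hiter k).2 _ (hmem k)))
    (hbdd.mono (range_subset_iff.2 fun k => mem_image_of_mem f (hmem k)))

lemma mem_projSet_gradStep_of_tendsto_comp (hA : IsClosed A) (hg : Continuous g)
    (hiter : ∀ k, w (k + 1) ∈ projSet A (w k - lam • g (w k)))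
    (hstep : Tendsto (fun k => w (k + 1) - w k) atTop (𝓝 0)) {φ : ℕ → ℕ} (hφ : StrictMono φ)
    {w₀ : EuclideanSpace ℝ (Fin n)} (hφw : Tendsto (fun k => w (φ k)) atTop (𝓝 w₀)) :
    w₀ ∈ projSet A (w₀ - lam • g w₀) :=
  mem_projSet_of_tendsto hA (hφw.sub (((hg.tendsto w₀).comp hφw).const_smul lam))
    (by simpa using (hstep.comp hφ.tendsto_atTop).add hφw) fun k => hiter (φ k)

end ProjectedGradient

theorem stmt5_general {n s : ℕ}
    (f : EuclideanSpace ℝ (Fin n) → ℝ)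
    (f' : EuclideanSpace ℝ (Fin n) → EuclideanSpace ℝ (Fin n))
    (L lam : ℝ) (hL : 0 < L)
    (hconv : ConvexOn ℝ Set.univ f)
    (hgrad : ∀ x, HasGradientAt f (f' x) x)
    (hlip : ∀ x y, ‖f' x - f' y‖ ≤ L * ‖x - y‖)
    (hbdd : BddBelow (f '' spSet n s))
    (hlam0 : 0 < lam) (hlamL : lam < 1 / L)
    (w : ℕ → EuclideanSpace ℝ (Fin n))
    (hw0 : w 0 ∈ spSet n s)
    (hiter : ∀ k, w (k + 1) ∈ projSet (spSet n s) (w k - lam • f' (w k)))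
    (wstar : EuclideanSpace ℝ (Fin n))
    (haccum : ∃ φ : ℕ → ℕ, StrictMono φ ∧ Tendsto (fun k => w (φ k)) atTop (𝓝 wstar))
    (hsingleton : ∃ p, projSet (spSet n s) (wstar - lam • f' wstar) = {p}) :
    Tendsto w atTop (𝓝 wstar) := by
  obtain ⟨φ, hφ, hφw⟩ := haccum
  obtain ⟨p, hp⟩ := hsingleton
  have hmem : ∀ k, w k ∈ spSet n s := fun k => k.casesOn hw0 fun k => (hiter k).1
  have hlamL' : lam * L < 1 := (lt_div_iff₀ hL).1 hlamL
  have hf' : Continuous f' :=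
    (LipschitzWith.of_dist_le' fun x y => by simpa only [dist_eq_norm] using hlip x y).continuous
  have hfix := mem_projSet_gradStep_of_tendsto_comp (isClosed_spSet s) hf' hiter
    (tendsto_sub_of_mem_projSet_gradStep hgrad hlip hlam0 hlamL' hbdd hmem hiter) hφ hφw
  rw [hp, mem_singleton_iff] at hfix
  subst hfix
  rw [spSet_eq_iUnion_coordSubmodule] at hp hiter
  obtain ⟨δ, hδ, hloc⟩ :=
    Metric.eventually_nhds_iff.1 (eventually_norm_sub_le_of_projSet_iUnion_eq_singleton hp)
  refine tendsto_of_mem_closure_range_of_dist_le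
    (mem_closure_of_tendsto hφw (Eventually.of_forall fun k => mem_range_self _)) hδ fun k hk => ?_
  have hne := hconv.norm_gradStep_sub_le hgrad hlip hL hlam0.le (by linarith) (w k) wstar
  rw [dist_eq_norm] at hk ⊢
  calc ‖w (k + 1) - wstar‖ ≤ ‖(w k - lam • f' (w k)) - (wstar - lam • f' wstar)‖ :=
        hloc (by rw [dist_eq_norm]; exact hne.trans_lt hk) _ (hiter k)
    _ ≤ ‖w k - wstar‖ := hne

/-- if the projection at an accumulation point is a singleton, the whole
PG sequence converges to that accumulation point. -/
theorem stmt5 {n s : ℕ} (hs1 : 1 ≤ s) (hsn : s ≤ n)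
    (f : EuclideanSpace ℝ (Fin n) → ℝ)
    (f' : EuclideanSpace ℝ (Fin n) → EuclideanSpace ℝ (Fin n))
    (L lam : ℝ) (hL : 0 < L)
    (hconv : ConvexOn ℝ Set.univ f)
    (hgrad : ∀ x, HasGradientAt f (f' x) x)
    (hlip : ∀ x y, ‖f' x - f' y‖ ≤ L * ‖x - y‖)
    (hbdd : BddBelow (f '' spSet n s))
    (hlam0 : 0 < lam) (hlamL : lam < 1 / L)
    (w : ℕ → EuclideanSpace ℝ (Fin n))
    (hw0 : w 0 ∈ spSet n s)
    (hiter : ∀ k, w (k + 1) ∈ projSet (spSet n s) (w k - lam • f' (w k)))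
    (wstar : EuclideanSpace ℝ (Fin n))
    (haccum : ∃ φ : ℕ → ℕ, StrictMono φ ∧ Tendsto (fun k => w (φ k)) atTop (𝓝 wstar))
    (hsingleton : ∃ p, projSet (spSet n s) (wstar - lam • f' wstar) = {p}) :
    Tendsto w atTop (𝓝 wstar) :=
  stmt5_general f f' L lam hL hconv hgrad hlip hbdd hlam0 hlamL w hw0 hiter wstar haccum hsingleton
end
end

section
/- Let {D_m}_{m≥0} be a nonincreasing sequence of nonnegative reals with D_m → 0, let θ ∈ (1/2, 1), and let a, C > 0 be such that a·D_m^{2θ} ≤ C·(D_{m−1} − D_m) for all m ≥ 1. Then D_m = O(m^{−1/(2θ−1)}): there exist K > 0 and M ∈ ℕ such that D_m ≤ K·m^{−1/(2θ−1)} for all m ≥ M. -/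
/-!
Put `ν = 2θ - 1 > 0` and `E_m = D_m^{-ν}`. Each step of the recursion raises `E` by at least a
fixed `c > 0`: if `D_{m+1} ≥ D_m / 2`, the recursion makes `D_m - D_{m+1}` of order `D_m^{1+ν}`,
and the tangent-line bound for the convex function `t ↦ t^{-ν}` turns this into an increment of
order one; if `D_{m+1} < D_m / 2`, then `E_{m+1} ≥ 2^ν E_m ≥ E_m + (2^ν - 1) E_0`. Hence
`E_m ≥ c m`, i.e. `D_m ≤ (c m)^{-1/ν}`.
-/

open Filter Topology Real

theorem add_nsmul_le_of_forall_add_le_succ {α : Type*} [AddCommMonoid α] [Preorder α]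
    [IsOrderedAddMonoid α] {u : ℕ → α} {c : α} (h : ∀ n, u n + c ≤ u (n + 1)) (n : ℕ) :
    u 0 + n • c ≤ u n := by
  induction n with
  | zero => simp
  | succ n ih =>
    calc u 0 + (n + 1) • c = (u 0 + n • c) + c := by rw [succ_nsmul, add_assoc]
      _ ≤ u n + c := by gcongr
      _ ≤ u (n + 1) := h n

/-- The tangent-line inequality for `t ↦ t ^ (-ν)` at `x`, scaled by `x ^ (1 + ν)`: this is
Bernoulli's inequality for the exponent `1 + ν` at `x / y`. -/
theorem mul_sub_le_rpow_mul_rpow_neg_sub {x y ν : ℝ} (hy : 0 < y) (hyx : y ≤ x) (hν : 0 ≤ ν) :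
    ν * (x - y) ≤ x ^ (1 + ν) * (y ^ (-ν) - x ^ (-ν)) := by
  have hx : 0 < x := hy.trans_le hyx
  have hbern : 1 + (1 + ν) * (x / y - 1) ≤ (x / y) ^ (1 + ν) := by
    have := one_add_mul_self_le_rpow_one_add (s := x / y - 1) (by linarith [div_pos hx hy])
      (p := 1 + ν) (by linarith)
    rwa [add_sub_cancel] at this
  have hxy : (x / y) ^ (1 + ν) * y = x ^ (1 + ν) * y ^ (-ν) := by
    rw [div_rpow hx.le hy.le, rpow_add hy, rpow_one, rpow_neg hy.le]
    field_simp
  have hxx : x ^ (1 + ν) * x ^ (-ν) = x := by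
    rw [← rpow_add hx, add_neg_cancel_right, rpow_one]
  have key : y + (1 + ν) * (x - y) ≤ x ^ (1 + ν) * y ^ (-ν) := by
    rw [← hxy]
    calc y + (1 + ν) * (x - y) = (1 + (1 + ν) * (x / y - 1)) * y := by field_simp
      _ ≤ (x / y) ^ (1 + ν) * y := mul_le_mul_of_nonneg_right hbern hy.le
  linarith

theorem min_le_rpow_neg_sub_rpow_neg {x y x₀ ν a C : ℝ} (hy : 0 < y) (hyx : y ≤ x)
    (hx₀ : x ≤ x₀) (hν : 0 ≤ ν) (ha : 0 ≤ a) (hC : 0 < C) (hrec : a * y ^ (1 + ν) ≤ C * (x - y)) :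
    min (ν * a / (2 ^ (1 + ν) * C)) ((2 ^ ν - 1) * x₀ ^ (-ν)) ≤ y ^ (-ν) - x ^ (-ν) := by
  have hx : 0 < x := hy.trans_le hyx
  rcases le_or_gt (x / 2) y with hhalf | hhalf
  · refine (min_le_left _ _).trans ?_
    have hpow : x ^ (1 + ν) / 2 ^ (1 + ν) ≤ y ^ (1 + ν) := by
      rw [← div_rpow hx.le zero_le_two]
      exact rpow_le_rpow (by positivity) hhalf (by linarith)
    have htangent := mul_sub_le_rpow_mul_rpow_neg_sub hy hyx hν
    have hxpos : 0 < x ^ (1 + ν) := rpow_pos_of_pos hx _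
    rw [div_le_iff₀ (by positivity), ← mul_le_mul_iff_right₀ hxpos]
    calc x ^ (1 + ν) * (ν * a) = ν * a * 2 ^ (1 + ν) * (x ^ (1 + ν) / 2 ^ (1 + ν)) := by
          field_simp
      _ ≤ ν * a * 2 ^ (1 + ν) * y ^ (1 + ν) := by gcongr
      _ = 2 ^ (1 + ν) * ν * (a * y ^ (1 + ν)) := by ring
      _ ≤ 2 ^ (1 + ν) * ν * (C * (x - y)) := by gcongr
      _ = 2 ^ (1 + ν) * C * (ν * (x - y)) := by ring
      _ ≤ 2 ^ (1 + ν) * C * (x ^ (1 + ν) * (y ^ (-ν) - x ^ (-ν))) := by gcongr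
      _ = x ^ (1 + ν) * ((y ^ (-ν) - x ^ (-ν)) * (2 ^ (1 + ν) * C)) := by ring
  · refine (min_le_right _ _).trans ?_
    have hdouble : 2 ^ ν * x ^ (-ν) ≤ y ^ (-ν) := by
      have := rpow_le_rpow_of_nonpos hy hhalf.le (neg_nonpos.mpr hν)
      rwa [div_rpow hx.le zero_le_two, rpow_neg zero_le_two, div_inv_eq_mul, mul_comm] at this
    have hx₀x : x₀ ^ (-ν) ≤ x ^ (-ν) := rpow_le_rpow_of_nonpos hx hx₀ (neg_nonpos.mpr hν)
    have h2 : 0 ≤ (2 : ℝ) ^ ν - 1 := sub_nonneg.mpr (one_le_rpow one_le_two hν)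
    nlinarith [mul_le_mul_of_nonneg_left hx₀x h2]

theorem stmt14_general (D : ℕ → ℝ) (hanti : Antitone D)
    (θ a C : ℝ) (hθ1 : 1 / 2 < θ) (ha : 0 < a) (hC : 0 < C)
    (hrec : ∀ m : ℕ, a * D (m + 1) ^ (2 * θ) ≤ C * (D m - D (m + 1))) :
    ∃ K > 0, ∃ M : ℕ, ∀ m ≥ M, D m ≤ K * (m : ℝ) ^ (-(1 / (2 * θ - 1))) := by
  by_cases hzero : ∃ M, D M ≤ 0
  · obtain ⟨M, hM⟩ := hzero
    exact ⟨1, one_pos, M, fun m hm => (hanti hm).trans (hM.trans (by positivity))⟩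
  push Not at hzero
  set ν := 2 * θ - 1 with hνdef
  have hν : 0 < ν := by linarith
  set c := min (ν * a / (2 ^ (1 + ν) * C)) ((2 ^ ν - 1) * D 0 ^ (-ν))
  have hc : 0 < c := lt_min (by positivity)
    (mul_pos (sub_pos.mpr (one_lt_rpow one_lt_two hν)) (rpow_pos_of_pos (hzero 0) _))
  have hstep (m : ℕ) : D m ^ (-ν) + c ≤ D (m + 1) ^ (-ν) := by
    have := min_le_rpow_neg_sub_rpow_neg (hzero (m + 1)) (hanti m.le_succ) (hanti m.zero_le)
      hν.le ha.le hC (by rw [hνdef, add_sub_cancel]; exact hrec m)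
    linarith
  refine ⟨c ^ (-(1 / ν)), by positivity, 1, fun m hm => ?_⟩
  have hgrowth : c * m ≤ D m ^ (-ν) := by
    have := add_nsmul_le_of_forall_add_le_succ hstep m
    rw [nsmul_eq_mul] at this
    linarith [rpow_pos_of_pos (hzero 0) (-ν)]
  have hm_pos : (0 : ℝ) < m := by exact_mod_cast hm
  rw [← mul_rpow hc.le hm_pos.le, ← one_div_neg_eq_neg_one_div, one_div,
    le_rpow_inv_iff_of_neg (hzero m) (by positivity) (by linarith)]
  exact hgrowth

/-- sublinear rate `O(m^{-1/(2θ-1)})` for the KL recursion with exponent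
`θ ∈ (1/2, 1)`. -/
theorem stmt14 (D : ℕ → ℝ) (hD : ∀ m, 0 ≤ D m) (hanti : Antitone D)
    (hlim : Tendsto D atTop (𝓝 0))
    (θ a C : ℝ) (hθ1 : 1 / 2 < θ) (hθ2 : θ < 1) (ha : 0 < a) (hC : 0 < C)
    (hrec : ∀ m : ℕ, a * D (m + 1) ^ (2 * θ) ≤ C * (D m - D (m + 1))) :
    ∃ K > 0, ∃ M : ℕ, ∀ m ≥ M, D m ≤ K * (m : ℝ) ^ (-(1 / (2 * θ - 1))) :=
  stmt14_general D hanti θ a C hθ1 ha hC hrec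
end

section
/- Let {D_m}_{m≥0} be a nonincreasing sequence of nonnegative reals with D_m → 0, let θ ∈ (0, 1/2], and let a, C > 0 be such that a·D_m^{2θ} ≤ C·(D_{m−1} − D_m) for all m ≥ 1. Then {D_m} converges Q-linearly to 0 eventually: there exist ρ ∈ (0,1) and M ∈ ℕ such that D_m ≤ ρ·D_{m−1} for all m ≥ M; in particular D_m = O(ρ^m). -/
open Filter Topology

/-!
Once `D m ≤ 1` (which eventually holds since `D m → 0`) and `2θ ≤ 1`, we have
`D (m+1) ≤ D (m+1) ^ (2θ)`, so the recursion gives `a D (m+1) ≤ C (D m - D (m+1))`,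
i.e. `D (m+1) ≤ C / (a + C) · D m`. A sequence that eventually contracts by a factor `ρ`
is `O(ρ ^ m)`.
-/

lemma le_div_add_mul_of_mul_le_mul_sub {a C x y : ℝ} (haC : 0 < a + C)
    (h : a * x ≤ C * (y - x)) : x ≤ C / (a + C) * y := by
  rw [div_mul_eq_mul_div, le_div_iff₀ haC]
  linarith

lemma exists_le_mul_pow_of_forall_ge_succ_le_mul {u : ℕ → ℝ} {ρ : ℝ} (hρ : 0 < ρ) {M : ℕ}
    (h : ∀ m ≥ M, u (m + 1) ≤ ρ * u m) : ∃ K > 0, ∀ m, u m ≤ K * ρ ^ m := by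
  set v : ℕ → ℝ := fun m ↦ u m / ρ ^ m
  have hv_tail : Antitone fun k ↦ v (M + k) := by
    refine antitone_nat_of_succ_le fun k ↦ ?_
    simp only [v, ← add_assoc, pow_succ]
    rw [← div_div, div_right_comm, div_le_div_iff_of_pos_right (by positivity), div_le_iff₀ hρ,
      mul_comm]
    exact h _ (Nat.le_add_right M k)
  obtain ⟨K₀, hK₀⟩ := ((Set.finite_Iic M).image v).bddAbove
  have hv_bdd : ∀ m, v m ≤ K₀ := by
    intro m
    rcases le_or_gt m M with hm | hm
    · exact hK₀ ⟨m, hm, rfl⟩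
    · obtain ⟨k, rfl⟩ := Nat.exists_eq_add_of_le hm.le
      exact (hv_tail (Nat.zero_le k)).trans (hK₀ ⟨M, le_refl M, rfl⟩)
  refine ⟨max K₀ 1, by positivity, fun m ↦ ?_⟩
  rw [← div_le_iff₀ (by positivity)]
  exact (hv_bdd m).trans (le_max_left _ _)

theorem stmt15_general (D : ℕ → ℝ) (hD : ∀ m, 0 ≤ D m)
    (hlim : Tendsto D atTop (𝓝 0))
    (θ a C : ℝ) (hθ2 : θ ≤ 1 / 2) (ha : 0 < a) (hC : 0 < C)
    (hrec : ∀ m : ℕ, a * D (m + 1) ^ (2 * θ) ≤ C * (D m - D (m + 1))) :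
    ∃ ρ : ℝ, 0 < ρ ∧ ρ < 1 ∧ (∃ M : ℕ, ∀ m ≥ M, D (m + 1) ≤ ρ * D m) ∧
      ∃ K > 0, ∀ m, D m ≤ K * ρ ^ m := by
  have haC : 0 < a + C := by linarith
  obtain ⟨M, hM⟩ := (hlim.eventually (ge_mem_nhds one_pos)).exists_forall_of_atTop
  have hcontract : ∀ m ≥ M, D (m + 1) ≤ C / (a + C) * D m := by
    intro m hm
    have hpow : D (m + 1) ≤ D (m + 1) ^ (2 * θ) :=
      Real.self_le_rpow_of_le_one (hD _) (hM _ (by omega)) (by linarith)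
    exact le_div_add_mul_of_mul_le_mul_sub haC
      ((mul_le_mul_of_nonneg_left hpow ha.le).trans (hrec m))
  have hρ : 0 < C / (a + C) := div_pos hC haC
  exact ⟨C / (a + C), hρ, (div_lt_one haC).2 (by linarith), ⟨M, hcontract⟩,
    exists_le_mul_pow_of_forall_ge_succ_le_mul hρ hcontract⟩

/-- eventual Q-linear convergence to 0 for the KL recursion with exponent
`θ ∈ (0, 1/2]`, and in particular `D_m = O(ρ^m)`. -/
theorem stmt15 (D : ℕ → ℝ) (hD : ∀ m, 0 ≤ D m) (hanti : Antitone D)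
    (hlim : Tendsto D atTop (𝓝 0))
    (θ a C : ℝ) (hθ1 : 0 < θ) (hθ2 : θ ≤ 1 / 2) (ha : 0 < a) (hC : 0 < C)
    (hrec : ∀ m : ℕ, a * D (m + 1) ^ (2 * θ) ≤ C * (D m - D (m + 1))) :
    ∃ ρ : ℝ, 0 < ρ ∧ ρ < 1 ∧ (∃ M : ℕ, ∀ m ≥ M, D (m + 1) ≤ ρ * D m) ∧
      ∃ K > 0, ∀ m, D m ≤ K * ρ ^ m :=
  stmt15_general D hD hlim θ a C hθ2 ha hC hrec
end
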